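/- Let N ≥ 2, fix an index i, let ξ ∈ ℝ^d, and let x_i* ∈ ℝ^d be a fixed point of f (f(x_i*) = x_i*). Set δ = max{‖ξ − x_i‖, ‖x_i* − x_i‖}. Then the retrieval error of pattern x_i after one update is bounded by ‖f(ξ) − x_i‖ ≤ 2 (N − 1) · exp(−β (Δ_i − 2 δ M)) · M. -/

import Mathlib

/-!
Subtracting `x i` from the convex combination `f ξ` leaves `Σ_j p_j (x_j - x_i)` with softmax
weights `p_j`, and each `‖x_j - x_i‖ ≤ 2M`. The `i`-th term vanishes, and for `j ≠ i` the weight is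
at most `exp(β⟪x_j - x_i, ξ⟫)`. Writing `ξ = x_i + (ξ - x_i)`, the separation gives
`⟪x_j - x_i, x_i⟫ ≤ -Δ_i` and Cauchy–Schwarz gives `⟪x_j - x_i, ξ - x_i⟫ ≤ 2Mδ`.
-/

open scoped BigOperators RealInnerProductSpace

/-- softmax(v)_j = exp(v_j) / Σ_k exp(v_k). -/
noncomputable def softmax {N : ℕ} (v : Fin N → ℝ) : Fin N → ℝ :=
  fun j => Real.exp (v j) / ∑ k, Real.exp (v k)

/-- The Hopfield update rule f(ξ) = X softmax(β Xᵀ ξ) = Σ_i softmax(β ⟪x_i, ξ⟫)_i • x_i. -/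
noncomputable def hopfieldUpdate {d N : ℕ} (x : Fin N → EuclideanSpace ℝ (Fin d))
    (β : ℝ) (ξ : EuclideanSpace ℝ (Fin d)) : EuclideanSpace ℝ (Fin d) :=
  ∑ i, softmax (fun j => β * ⟪x j, ξ⟫) i • x i

theorem real_inner_sub_inner_le {E : Type*} [NormedAddCommGroup E] [InnerProductSpace ℝ E]
    (a b c : E) : ⟪a, c⟫ - ⟪b, c⟫ ≤ ⟪a, b⟫ - ⟪b, b⟫ + ‖a - b‖ * ‖c - b‖ := by
  have hsplit : ⟪a, c⟫ - ⟪b, c⟫ = ⟪a, b⟫ - ⟪b, b⟫ + ⟪a - b, c - b⟫ := by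
    simp only [inner_sub_left, inner_sub_right]
    ring
  rw [hsplit]
  gcongr
  exact real_inner_le_norm _ _

section Softmax

variable {N : ℕ} (v : Fin N → ℝ)

theorem softmax_nonneg (j : Fin N) : 0 ≤ softmax v j :=
  div_nonneg (Real.exp_pos _).le (Finset.sum_nonneg fun k _ => (Real.exp_pos (v k)).le)

theorem sum_softmax [NeZero N] : ∑ j, softmax v j = 1 := by
  have hpos : 0 < ∑ k, Real.exp (v k) :=
    Finset.sum_pos (fun k _ => Real.exp_pos _) Finset.univ_nonempty
  simp only [softmax, ← Finset.sum_div]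
  exact div_self hpos.ne'

theorem softmax_le_exp_sub (i j : Fin N) : softmax v j ≤ Real.exp (v j - v i) := by
  rw [Real.exp_sub, softmax]
  exact div_le_div_of_nonneg_left (Real.exp_pos _).le (Real.exp_pos _)
    (Finset.single_le_sum (fun k _ => (Real.exp_pos (v k)).le) (Finset.mem_univ i))

end Softmax

section Hopfield

variable {d N : ℕ} (x : Fin N → EuclideanSpace ℝ (Fin d)) (β : ℝ)

theorem norm_hopfieldUpdate_sub_le [NeZero N] (ξ y : EuclideanSpace ℝ (Fin d)) :
    ‖hopfieldUpdate x β ξ - y‖ ≤ ∑ j, softmax (fun k => β * ⟪x k, ξ⟫) j * ‖x j - y‖ := by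
  set p := softmax fun k => β * ⟪x k, ξ⟫
  have hrepr : hopfieldUpdate x β ξ - y = ∑ j, p j • (x j - y) := by
    rw [Finset.sum_congr rfl fun j _ => smul_sub (p j) (x j) y, Finset.sum_sub_distrib,
      ← Finset.sum_smul, sum_softmax, one_smul]
    rfl
  rw [hrepr]
  refine (norm_sum_le _ _).trans_eq (Finset.sum_congr rfl fun j _ => ?_)
  rw [norm_smul, Real.norm_of_nonneg (softmax_nonneg _ j)]

theorem softmax_hopfield_le_exp {M Δ δ : ℝ} (hβ : 0 ≤ β) (hM : ∀ k, ‖x k‖ ≤ M)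
    (ξ : EuclideanSpace ℝ (Fin d)) {i j : Fin N} (hΔ : Δ ≤ ⟪x i, x i⟫ - ⟪x i, x j⟫)
    (hδ : ‖ξ - x i‖ ≤ δ) :
    softmax (fun k => β * ⟪x k, ξ⟫) j ≤ Real.exp (-β * (Δ - 2 * δ * M)) := by
  refine (softmax_le_exp_sub _ i j).trans (Real.exp_le_exp.mpr ?_)
  have hdist : ‖x j - x i‖ ≤ 2 * M :=
    (norm_sub_le_of_le (hM j) (hM i)).trans_eq (two_mul M).symm
  have hinner : ⟪x j, ξ⟫ - ⟪x i, ξ⟫ ≤ -Δ + 2 * M * δ := by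
    have hCS : ‖x j - x i‖ * ‖ξ - x i‖ ≤ 2 * M * δ :=
      mul_le_mul hdist hδ (norm_nonneg _) (by linarith [norm_nonneg (x i), hM i])
    linarith [real_inner_sub_inner_le (x j) (x i) ξ, real_inner_comm (x j) (x i)]
  calc β * ⟪x j, ξ⟫ - β * ⟪x i, ξ⟫ = β * (⟪x j, ξ⟫ - ⟪x i, ξ⟫) := by ring
    _ ≤ β * (-Δ + 2 * M * δ) := mul_le_mul_of_nonneg_left hinner hβ
    _ = -β * (Δ - 2 * δ * M) := by ring

end Hopfield

theorem retrieval_error_bound_fixedPoint_general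
    {d N : ℕ} (x : Fin N → EuclideanSpace ℝ (Fin d)) (β M Δ : ℝ)
    (hβ : 0 < β)
    (hM : IsGreatest (Set.range fun i => ‖x i‖) M)
    (i : Fin N)
    (hΔ : IsLeast {v : ℝ | ∃ j, j ≠ i ∧ v = ⟪x i, x i⟫ - ⟪x i, x j⟫} Δ)
    (ξ xstar : EuclideanSpace ℝ (Fin d)) :
    ‖hopfieldUpdate x β ξ - x i‖
      ≤ 2 * ((N : ℝ) - 1) *
          Real.exp (-β * (Δ - 2 * max ‖ξ - x i‖ ‖xstar - x i‖ * M)) * M := by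
  classical
  have : NeZero N := NeZero.of_pos i.pos
  set E := Real.exp (-β * (Δ - 2 * max ‖ξ - x i‖ ‖xstar - x i‖ * M))
  have hMk : ∀ k, ‖x k‖ ≤ M := fun k => hM.2 ⟨k, rfl⟩
  have hterm : ∀ j ∈ Finset.univ.erase i,
      softmax (fun k => β * ⟪x k, ξ⟫) j * ‖x j - x i‖ ≤ E * (2 * M) := fun j hj =>
    mul_le_mul
      (softmax_hopfield_le_exp x β hβ.le hMk ξ (hΔ.2 ⟨j, Finset.ne_of_mem_erase hj, rfl⟩)
        (le_max_left _ _))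
      ((norm_sub_le_of_le (hMk j) (hMk i)).trans_eq (two_mul M).symm) (norm_nonneg _)
      (Real.exp_nonneg _)
  calc ‖hopfieldUpdate x β ξ - x i‖
      ≤ ∑ j, softmax (fun k => β * ⟪x k, ξ⟫) j * ‖x j - x i‖ :=
        norm_hopfieldUpdate_sub_le x β ξ _
    _ = ∑ j ∈ Finset.univ.erase i, softmax (fun k => β * ⟪x k, ξ⟫) j * ‖x j - x i‖ :=
        (Finset.sum_erase _ (by simp)).symm
    _ ≤ (Finset.univ.erase i).card • (E * (2 * M)) := Finset.sum_le_card_nsmul _ _ _ hterm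
    _ = 2 * ((N : ℝ) - 1) * E * M := by
        rw [Finset.card_erase_of_mem (Finset.mem_univ i), Finset.card_univ, Fintype.card_fin,
          nsmul_eq_mul, Nat.cast_pred i.pos]
        ring

/-- For N ≥ 2, index i, ξ, and a fixed point x_i* of f, with
δ = max{‖ξ − x_i‖, ‖x_i* − x_i‖}, the retrieval error of pattern x_i after one update satisfies
‖f(ξ) − x_i‖ ≤ 2 (N − 1) · exp(−β (Δ_i − 2 δ M)) · M. -/
theorem retrieval_error_bound_fixedPoint
    {d N : ℕ} (hN : 2 ≤ N) (x : Fin N → EuclideanSpace ℝ (Fin d)) (β M Δ : ℝ)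
    (hβ : 0 < β)
    (hM : IsGreatest (Set.range fun i => ‖x i‖) M)
    (i : Fin N)
    (hΔ : IsLeast {v : ℝ | ∃ j, j ≠ i ∧ v = ⟪x i, x i⟫ - ⟪x i, x j⟫} Δ)
    (ξ xstar : EuclideanSpace ℝ (Fin d))
    (hfix : hopfieldUpdate x β xstar = xstar) :
    ‖hopfieldUpdate x β ξ - x i‖
      ≤ 2 * ((N : ℝ) - 1) *
          Real.exp (-β * (Δ - 2 * max ‖ξ - x i‖ ‖xstar - x i‖ * M)) * M :=
  retrieval_error_bound_fixedPoint_general x β M Δ hβ hM i hΔ ξ xstar
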